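/- arXiv:2111.15383 — 2 statements merged into one kernel-verified Lean document; each statement's English description precedes it below -/
import Mathlib

section
/- Let d ≥ 3 be an integer, a_c = (d−2)/2, and let (a,b) ∈ ℝ² satisfy a ≤ b < a+1 and a < a_c. Set p = 2d/(d−2+2(b−a)), n = d/(1+a−b) and α = (a_c−a)(a+1−b)/(a_c−a+b). Assume 0 < α ≤ 1 and set Z = 2^n ∫_{ℝ^d} |x|^{−bp}(1+|x|^{2α})^{−n} dx. Define w(x) = ((1+|x|^{2α})/2)^{−(n−2)/2} for x ≠ 0. Then the integrals ∫_{ℝ^d} w(x)^p |x|^{−bp} dx and ∫_{ℝ^d} |∇w(x)|² |x|^{−2a} dx are finite and equality holds in the optimal Caffarelli–Kohn–Nirenberg inequality: (∫_{ℝ^d} w(x)^p |x|^{−bp} dx)^{2/p} = (4/(n(n−2)α² Z^{2/n})) ∫_{ℝ^d} |∇w(x)|² |x|^{−2a} dx. -/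
/-!
Both integrands are radial. In polar coordinates followed by the substitution `u = r ^ (2α)`,
each becomes a multiple of `B(s) = ∫₀^∞ u ^ (s - 1) (1 + u) ^ (-n) du`, with `s = n / 2` for the
weighted `L^p` term and `s = n / 2 + 1` for the gradient term, and one integration by parts gives
`B(n/2 + 1) = n / (n - 2) · B(n/2)`. Hence `∫ w^p |x|^(-bp) = Z` and
`∫ |∇w|² |x|^(-2a) = n (n - 2) α² Z / 4`, and since `2 / p = 1 - 2 / n` the claimed equality
reduces to `Z ^ (1 - 2/n) = Z / Z ^ (2/n)`.
-/

open MeasureTheory Real Set Filter Metric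

section BetaPrime

variable {s m : ℝ}

lemma integrableOn_Ioi_rpow_mul_one_add_rpow_neg (hs : 0 < s) (hsm : s < m) :
    IntegrableOn (fun u : ℝ => u ^ (s - 1) * (1 + u) ^ (-m)) (Ioi 0) := by
  have hmeas : AEStronglyMeasurable (fun u : ℝ => u ^ (s - 1) * (1 + u) ^ (-m)) :=
    ((measurable_id.pow_const _).mul
      ((measurable_const.add measurable_id).pow_const _)).aestronglyMeasurable
  rw [← Ioc_union_Ioi_eq_Ioi zero_le_one]
  refine IntegrableOn.union ?_ ?_
  · have hdom : IntegrableOn (fun u : ℝ => u ^ (s - 1)) (Ioc 0 1) := by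
      rw [← intervalIntegrable_iff_integrableOn_Ioc_of_le zero_le_one]
      exact intervalIntegral.intervalIntegrable_rpow' (by linarith)
    refine hdom.mono' hmeas.restrict ?_
    filter_upwards [ae_restrict_mem measurableSet_Ioc] with u ⟨hu0, _⟩
    rw [norm_of_nonneg (by positivity)]
    exact mul_le_of_le_one_right (by positivity)
      (rpow_le_one_of_one_le_of_nonpos (by linarith) (by linarith))
  · have hdom : IntegrableOn (fun u : ℝ => u ^ (s - 1 - m)) (Ioi 1) :=
      integrableOn_Ioi_rpow_of_lt (by linarith) one_pos
    refine hdom.mono' hmeas.restrict ?_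
    filter_upwards [ae_restrict_mem measurableSet_Ioi] with u (hu : 1 < u)
    have hu0 : 0 < u := one_pos.trans hu
    rw [norm_of_nonneg (by positivity), sub_eq_add_neg (s - 1), rpow_add hu0]
    exact mul_le_mul_of_nonneg_left (rpow_le_rpow_of_nonpos hu0 (by linarith) (by linarith))
      (by positivity)

/-- Integration by parts against `u ^ s * (1 + u) ^ (1 - m)`, which vanishes at both ends. -/
lemma integral_Ioi_rpow_mul_one_add_rpow_neg_succ (hs : 0 < s) (hsm : s + 1 < m) :
    ∫ u in Ioi (0 : ℝ), u ^ s * (1 + u) ^ (-m) =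
      s / (m - s - 1) * ∫ u in Ioi (0 : ℝ), u ^ (s - 1) * (1 + u) ^ (-m) := by
  set I := ∫ u in Ioi (0 : ℝ), u ^ (s - 1) * (1 + u) ^ (-m)
  have hI := integrableOn_Ioi_rpow_mul_one_add_rpow_neg hs (by linarith : s < m)
  have hJ : IntegrableOn (fun u : ℝ => u ^ s * (1 + u) ^ (-m)) (Ioi 0) := by
    simpa using integrableOn_Ioi_rpow_mul_one_add_rpow_neg (s := s + 1) (by linarith) hsm
  have hIJ : IntegrableOn (fun u : ℝ => u ^ (s - 1) * (1 + u) ^ (-(m - 1))) (Ioi 0) :=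
    integrableOn_Ioi_rpow_mul_one_add_rpow_neg hs (by linarith)
  have hsplit : ∫ u in Ioi (0 : ℝ), u ^ (s - 1) * (1 + u) ^ (-(m - 1)) =
      I + ∫ u in Ioi (0 : ℝ), u ^ s * (1 + u) ^ (-m) := by
    rw [← integral_add hI hJ]
    refine setIntegral_congr_fun measurableSet_Ioi fun u (hu : 0 < u) => ?_
    have h1u : 0 < 1 + u := by linarith
    rw [show -(m - 1) = -m + 1 by ring, rpow_add_one h1u.ne', rpow_sub_one hu.ne']
    field_simp
  set F : ℝ → ℝ := fun u => u ^ s * (1 + u) ^ (-(m - 1))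
  have hderiv : ∀ u ∈ Ioi (0 : ℝ), HasDerivAt F
      (s * (u ^ (s - 1) * (1 + u) ^ (-(m - 1))) - (m - 1) * (u ^ s * (1 + u) ^ (-m))) u := by
    intro u (hu : 0 < u)
    have h1 := hasDerivAt_rpow_const (p := s) (Or.inl hu.ne')
    have h2 := ((hasDerivAt_id' u).const_add 1).rpow_const (p := -(m - 1))
      (Or.inl (by linarith))
    rw [show -(m - 1) - 1 = -m by ring] at h2
    exact (h1.mul h2).congr_deriv (by ring)
  have hF0 : ContinuousWithinAt F (Ici 0) 0 :=
    ((continuousAt_rpow_const _ _ (Or.inr hs.le)).mul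
      ((continuous_const.add continuous_id).continuousAt.rpow_const
        (Or.inl (by norm_num)))).continuousWithinAt
  have hFtop : Tendsto F atTop (nhds 0) := by
    refine tendsto_of_tendsto_of_tendsto_of_le_of_le' tendsto_const_nhds
      (tendsto_rpow_neg_atTop (y := m - 1 - s) (by linarith)) ?_ ?_
    · filter_upwards [eventually_ge_atTop 0] with u hu
      positivity
    · filter_upwards [eventually_gt_atTop 0] with u hu
      rw [show -(m - 1 - s) = s + -(m - 1) by ring, rpow_add hu]
      exact mul_le_mul_of_nonneg_left (rpow_le_rpow_of_nonpos hu (by linarith) (by linarith))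
        (by positivity)
  have hFTC := integral_Ioi_of_hasDerivAt_of_tendsto hF0 hderiv
    ((hIJ.const_mul s).sub (hJ.const_mul (m - 1))) hFtop
  rw [integral_sub (hIJ.const_mul s) (hJ.const_mul (m - 1)), integral_const_mul,
    integral_const_mul, hsplit] at hFTC
  have hFzero : F 0 = 0 := by simp [F, zero_rpow hs.ne']
  rw [hFzero] at hFTC
  rw [div_mul_eq_mul_div, eq_div_iff (by linarith)]
  linarith

end BetaPrime

/-- The right-hand side has the shape of `integral_comp_rpow_Ioi`. -/
lemma eqOn_radial_density_rpow {k : ℕ} {β : ℝ} (s m : ℝ) (hk : 0 < k) (hβ : β ≠ 0) :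
    EqOn (fun r : ℝ => r ^ (k - 1) • (r ^ (β * s - k) * (1 + r ^ β) ^ (-m)))
      (fun r : ℝ => |β|⁻¹ • ((|β| * r ^ (β - 1)) • ((r ^ β) ^ (s - 1) * (1 + r ^ β) ^ (-m))))
      (Ioi 0) := by
  intro r (hr : 0 < r)
  have hcast : ((k - 1 : ℕ) : ℝ) = k - 1 := by
    rw [Nat.cast_sub hk, Nat.cast_one]
  simp only [smul_eq_mul]
  rw [← rpow_natCast, hcast, ← rpow_mul hr.le, ← mul_assoc, ← rpow_add hr,
    ← mul_assoc, ← mul_assoc, inv_mul_cancel_left₀ (abs_ne_zero.2 hβ), ← rpow_add hr]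
  ring_nf

section Radial

variable {E : Type*} [NormedAddCommGroup E] [NormedSpace ℝ E] [Nontrivial E]
  [FiniteDimensional ℝ E] [MeasurableSpace E] [BorelSpace E]
  (μ : Measure E) [μ.IsAddHaarMeasure] {β : ℝ} (s m : ℝ)

local notation "dim" => Module.finrank ℝ E

lemma integrable_norm_rpow_mul_one_add_norm_rpow_neg (hβ : β ≠ 0) (hs : 0 < s) (hsm : s < m) :
    Integrable (fun x : E => ‖x‖ ^ (β * s - dim) * (1 + ‖x‖ ^ β) ^ (-m)) μ := by
  rw [integrable_fun_norm_addHaar μ (f := fun r => r ^ (β * s - dim) * (1 + r ^ β) ^ (-m)),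
    integrableOn_congr_fun (eqOn_radial_density_rpow s m Module.finrank_pos hβ) measurableSet_Ioi]
  exact ((integrableOn_Ioi_comp_rpow_iff _ hβ).2
    (integrableOn_Ioi_rpow_mul_one_add_rpow_neg hs hsm)).smul (|β|⁻¹ : ℝ)

lemma integral_norm_rpow_mul_one_add_norm_rpow_neg (hβ : β ≠ 0) :
    ∫ x : E, ‖x‖ ^ (β * s - dim) * (1 + ‖x‖ ^ β) ^ (-m) ∂μ =
      dim * μ.real (ball 0 1) * |β|⁻¹ * ∫ u in Ioi (0 : ℝ), u ^ (s - 1) * (1 + u) ^ (-m) := by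
  rw [integral_fun_norm_addHaar μ (fun r => r ^ (β * s - dim) * (1 + r ^ β) ^ (-m)),
    setIntegral_congr_fun measurableSet_Ioi (eqOn_radial_density_rpow s m Module.finrank_pos hβ),
    integral_smul,
    integral_comp_rpow_Ioi (fun u => u ^ (s - 1) * (1 + u) ^ (-m)) hβ]
  simp only [nsmul_eq_mul, smul_eq_mul, mul_assoc]

lemma integral_norm_rpow_mul_one_add_norm_rpow_neg_succ (hβ : β ≠ 0) (hs : 0 < s)
    (hsm : s + 1 < m) :
    ∫ x : E, ‖x‖ ^ (β * (s + 1) - dim) * (1 + ‖x‖ ^ β) ^ (-m) ∂μ =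
      s / (m - s - 1) * ∫ x : E, ‖x‖ ^ (β * s - dim) * (1 + ‖x‖ ^ β) ^ (-m) ∂μ := by
  rw [integral_norm_rpow_mul_one_add_norm_rpow_neg μ _ _ hβ,
    integral_norm_rpow_mul_one_add_norm_rpow_neg μ _ _ hβ, add_sub_cancel_right,
    integral_Ioi_rpow_mul_one_add_rpow_neg_succ hs hsm]
  ring

end Radial

section Gradient

variable {E : Type*} [NormedAddCommGroup E] [NormedSpace ℝ E] [Nontrivial E] {x : E}

lemma norm_fderiv_comp_norm {φ : ℝ → ℝ} {φ' : ℝ} (hφ : HasDerivAt φ φ' ‖x‖)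
    (hx : DifferentiableAt ℝ (‖·‖) x) : ‖fderiv ℝ (fun y => φ ‖y‖) x‖ = |φ'| := by
  rw [show (fun y => φ ‖y‖) = φ ∘ (‖·‖) from rfl,
    (hφ.comp_hasFDerivAt x hx.hasFDerivAt).fderiv, norm_smul, norm_fderiv_norm hx, mul_one,
    Real.norm_eq_abs]

lemma hasDerivAt_one_add_rpow_div_two_rpow {r : ℝ} (hr : 0 < r) (β γ : ℝ) :
    HasDerivAt (fun t : ℝ => ((1 + t ^ β) / 2) ^ (-γ))
      (-γ * ((1 + r ^ β) / 2) ^ (-γ - 1) * (β * r ^ (β - 1) / 2)) r := by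
  have hbase := ((hasDerivAt_rpow_const (p := β) (Or.inl hr.ne')).const_add 1).div_const 2
  exact (hbase.rpow_const (p := -γ) (Or.inl (by positivity))).congr_deriv (by ring)

lemma norm_fderiv_one_add_norm_rpow_div_two_rpow_sq (hx : DifferentiableAt ℝ (‖·‖) x)
    (β γ : ℝ) :
    ‖fderiv ℝ (fun y : E => ((1 + ‖y‖ ^ β) / 2) ^ (-γ)) x‖ ^ 2 =
      (γ * β / 2) ^ 2 * ‖x‖ ^ (2 * β - 2) * ((1 + ‖x‖ ^ β) / 2) ^ (-(2 * γ + 2)) := by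
  have hx0 : 0 < ‖x‖ := norm_pos_iff.2 fun h => not_differentiableAt_norm_zero E (h ▸ hx)
  have hA : 0 ≤ (1 + ‖x‖ ^ β) / 2 := by positivity
  rw [norm_fderiv_comp_norm (hasDerivAt_one_add_rpow_div_two_rpow hx0 β γ) hx, sq_abs,
    show 2 * β - 2 = (β - 1) * (2 : ℕ) by push_cast; ring,
    show -(2 * γ + 2) = (-γ - 1) * (2 : ℕ) by push_cast; ring,
    rpow_mul_natCast hx0.le, rpow_mul_natCast hA]
  ring

end Gradient

lemma div_rpow_neg {y c : ℝ} (hy : 0 ≤ y) (hc : 0 ≤ c) (n : ℝ) :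
    (y / c) ^ (-n) = c ^ n * y ^ (-n) := by
  rw [div_rpow hy hc, rpow_neg hc, div_inv_eq_mul, mul_comm]

section Parameters

variable {d a b p n α : ℝ}

lemma ckn_two_lt_n (hd : 2 < d) (hab : a ≤ b) (hba : b < a + 1)
    (hn : n = d / (1 + a - b)) : 2 < n := by
  rw [hn, lt_div_iff₀ (by linarith)]
  nlinarith

lemma ckn_p_mul_sub_two (hd : 2 < d) (hab : a ≤ b) (hba : b < a + 1)
    (hp : p = 2 * d / (d - 2 + 2 * (b - a))) (hn : n = d / (1 + a - b)) :
    p * (n - 2) = 2 * n := by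
  have h₁ : d - 2 + 2 * (b - a) ≠ 0 := by linarith
  have h₂ : 1 + a - b ≠ 0 := by linarith
  subst hp hn
  field_simp
  ring

lemma ckn_n_mul_α (hd : 2 < d) (hab : a ≤ b) (hba : b < a + 1)
    (hp : p = 2 * d / (d - 2 + 2 * (b - a))) (hn : n = d / (1 + a - b))
    (hα : α = ((d - 2) / 2 - a) * (a + 1 - b) / ((d - 2) / 2 - a + b)) :
    n * α = d - b * p := by
  have h₁ : d - 2 + 2 * (b - a) ≠ 0 := by linarith
  have h₂ : 1 + a - b ≠ 0 := by linarith
  have h₃ : d - 2 - a * 2 + b * 2 ≠ 0 := by linarith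
  subst hp hn hα
  field_simp
  ring

lemma ckn_n_sub_two_mul_α (hd : 2 < d) (hab : a ≤ b) (hba : b < a + 1)
    (hn : n = d / (1 + a - b))
    (hα : α = ((d - 2) / 2 - a) * (a + 1 - b) / ((d - 2) / 2 - a + b)) :
    (n - 2) * α = d - 2 - 2 * a := by
  have h₂ : 1 + a - b ≠ 0 := by linarith
  have h₃ : d - 2 - a * 2 + b * 2 ≠ 0 := by linarith
  subst hn hα
  field_simp
  ring

lemma ckn_potential_integrand {r : ℝ} (hr : 0 ≤ r) (hpn : p * (n - 2) = 2 * n)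
    (hnα : n * α = d - b * p) :
    (((1 + r ^ (2 * α)) / 2) ^ (-((n - 2) / 2))) ^ p * r ^ (-(b * p)) =
      2 ^ n * (r ^ (2 * α * (n / 2) - d) * (1 + r ^ (2 * α)) ^ (-n)) := by
  rw [← rpow_mul (by positivity), show -((n - 2) / 2) * p = -n by linarith,
    div_rpow_neg (by positivity) zero_le_two, show -(b * p) = 2 * α * (n / 2) - d by linarith]
  ring

lemma ckn_gradient_integrand {E : Type*} [NormedAddCommGroup E] [NormedSpace ℝ E] [Nontrivial E]
    {x : E} (hx : DifferentiableAt ℝ (‖·‖) x) (hn2α : (n - 2) * α = d - 2 - 2 * a) :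
    ‖fderiv ℝ (fun y : E => ((1 + ‖y‖ ^ (2 * α)) / 2) ^ (-((n - 2) / 2))) x‖ ^ 2 *
        ‖x‖ ^ (-(2 * a)) =
      ((n - 2) * α / 2) ^ 2 * 2 ^ n *
        (‖x‖ ^ (2 * α * (n / 2 + 1) - d) * (1 + ‖x‖ ^ (2 * α)) ^ (-n)) := by
  have hx0 : 0 < ‖x‖ := norm_pos_iff.2 fun h => not_differentiableAt_norm_zero E (h ▸ hx)
  rw [norm_fderiv_one_add_norm_rpow_div_two_rpow_sq hx, show -(2 * ((n - 2) / 2) + 2) = -n by ring,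
    div_rpow_neg (by positivity) zero_le_two,
    show 2 * α * (n / 2 + 1) - d = 2 * (2 * α) - 2 + -(2 * a) by linarith, rpow_add hx0]
  ring

end Parameters

theorem ckn_extremal_of_finrank_eq {E : Type*} [NormedAddCommGroup E] [InnerProductSpace ℝ E]
    [FiniteDimensional ℝ E] [MeasurableSpace E] [BorelSpace E] (μ : Measure E)
    [μ.IsAddHaarMeasure] {d a b p n α Z : ℝ} (hdim : (Module.finrank ℝ E : ℝ) = d) (hd : 2 < d)
    (hab : a ≤ b) (hba : b < a + 1) (hp : p = 2 * d / (d - 2 + 2 * (b - a)))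
    (hn : n = d / (1 + a - b)) (hα : α = ((d - 2) / 2 - a) * (a + 1 - b) / ((d - 2) / 2 - a + b))
    (hα0 : 0 < α)
    (hZ : Z = 2 ^ n * ∫ x, ‖x‖ ^ (-(b * p)) * (1 + ‖x‖ ^ (2 * α)) ^ (-n) ∂μ)
    (w : E → ℝ) (hw : ∀ x, w x = ((1 + ‖x‖ ^ (2 * α)) / 2) ^ (-((n - 2) / 2))) :
    Integrable (fun x => w x ^ p * ‖x‖ ^ (-(b * p))) μ ∧
    Integrable (fun x => ‖fderiv ℝ w x‖ ^ 2 * ‖x‖ ^ (-(2 * a))) μ ∧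
    (∫ x, w x ^ p * ‖x‖ ^ (-(b * p)) ∂μ) ^ (2 / p) =
      4 / (n * (n - 2) * α ^ 2 * Z ^ (2 / n)) * ∫ x, ‖fderiv ℝ w x‖ ^ 2 * ‖x‖ ^ (-(2 * a)) ∂μ := by
  have hn2 := ckn_two_lt_n hd hab hba hn
  have hpn := ckn_p_mul_sub_two hd hab hba hp hn
  have hnα := ckn_n_mul_α hd hab hba hp hn hα
  have hn2α := ckn_n_sub_two_mul_α hd hab hba hn hα
  have hβ : 2 * α ≠ 0 := by positivity
  subst hdim
  have : Nontrivial E :=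
    Module.nontrivial_of_finrank_pos (R := ℝ) (Nat.cast_pos.1 (two_pos.trans hd))
  set g : ℝ → E → ℝ :=
    fun s x => ‖x‖ ^ (2 * α * s - Module.finrank ℝ E) * (1 + ‖x‖ ^ (2 * α)) ^ (-n)
  have hg : ∀ s, 0 < s → s < n → Integrable (g s) μ := fun s hs hsn =>
    integrable_norm_rpow_mul_one_add_norm_rpow_neg μ s n hβ hs hsn
  have hg_succ : ∫ x, g (n / 2 + 1) x ∂μ = n / (n - 2) * ∫ x, g (n / 2) x ∂μ := by
    rw [integral_norm_rpow_mul_one_add_norm_rpow_neg_succ μ _ _ hβ (by positivity) (by linarith),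
      show n - n / 2 - 1 = (n - 2) / 2 by ring, div_div_div_cancel_right₀ two_ne_zero]
  have hwp : (fun x => w x ^ p * ‖x‖ ^ (-(b * p))) = fun x => 2 ^ n * g (n / 2) x :=
    funext fun x => hw x ▸ ckn_potential_integrand (norm_nonneg x) hpn hnα
  have hgrad : (fun x => ‖fderiv ℝ w x‖ ^ 2 * ‖x‖ ^ (-(2 * a))) =ᵐ[μ]
      fun x => ((n - 2) * α / 2) ^ 2 * 2 ^ n * g (n / 2 + 1) x := by
    filter_upwards [Measure.ae_ne μ 0] with x hx
    rw [show w = _ from funext hw]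
    exact ckn_gradient_integrand ((contDiffAt_norm ℝ hx).differentiableAt one_ne_zero) hn2α
  have hZg : Z = 2 ^ n * ∫ x, g (n / 2) x ∂μ := by
    rw [hZ, show -(b * p) = 2 * α * (n / 2) - Module.finrank ℝ E by linarith]
  have hZ0 : 0 ≤ Z := hZg ▸ mul_nonneg (by positivity) (integral_nonneg fun x => by positivity)
  refine ⟨hwp ▸ (hg _ (by positivity) (by linarith)).const_mul _,
    ((hg _ (by positivity) (by linarith)).const_mul _).congr hgrad.symm, ?_⟩
  have hn0 : n ≠ 0 := by positivity
  have hn2' : n - 2 ≠ 0 := by linarith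
  rw [hwp, integral_const_mul, ← hZg, integral_congr_ae hgrad, integral_const_mul, hg_succ,
    show 2 / p = 1 - 2 / n by rw [div_eq_iff (by rintro rfl; linarith)]; field_simp; linarith,
    rpow_sub' hZ0 (by rw [one_sub_div hn0]; exact div_ne_zero hn2' hn0), rpow_one]
  field_simp
  rw [hZg]
  ring

theorem ckn_extremal_general (d : ℕ) (hd : 3 ≤ d) (a b p n α Z : ℝ)
    (hab : a ≤ b) (hba : b < a + 1)
    (hp : p = 2 * d / ((d : ℝ) - 2 + 2 * (b - a)))
    (hn : n = (d : ℝ) / (1 + a - b))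
    (hα : α = (((d : ℝ) - 2) / 2 - a) * (a + 1 - b) / (((d : ℝ) - 2) / 2 - a + b))
    (hα0 : 0 < α)
    (hZ : Z = (2 : ℝ) ^ n * ∫ x : EuclideanSpace ℝ (Fin d),
        ‖x‖ ^ (-(b * p)) * (1 + ‖x‖ ^ (2 * α)) ^ (-n))
    (w : EuclideanSpace ℝ (Fin d) → ℝ)
    (hw : ∀ x, w x = ((1 + ‖x‖ ^ (2 * α)) / 2) ^ (-((n - 2) / 2))) :
    Integrable (fun x : EuclideanSpace ℝ (Fin d) => w x ^ p * ‖x‖ ^ (-(b * p))) ∧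
    Integrable (fun x : EuclideanSpace ℝ (Fin d) =>
        ‖fderiv ℝ w x‖ ^ 2 * ‖x‖ ^ (-(2 * a))) ∧
    (∫ x : EuclideanSpace ℝ (Fin d), w x ^ p * ‖x‖ ^ (-(b * p))) ^ (2 / p) =
      4 / (n * (n - 2) * α ^ 2 * Z ^ (2 / n)) *
        ∫ x : EuclideanSpace ℝ (Fin d), ‖fderiv ℝ w x‖ ^ 2 * ‖x‖ ^ (-(2 * a)) :=
  ckn_extremal_of_finrank_eq volume (by simp) (by exact_mod_cast (by omega : 2 < d)) hab hba hp hn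
    hα hα0 hZ w hw

/-- The function w(x) = ((1+|x|^{2α})/2)^{-(n-2)/2} is extremal for the optimal
Caffarelli-Kohn-Nirenberg inequality when 0 < α ≤ 1. -/
theorem ckn_extremal (d : ℕ) (hd : 3 ≤ d) (a b p n α Z : ℝ)
    (hab : a ≤ b) (hba : b < a + 1) (ha : a < ((d : ℝ) - 2) / 2)
    (hp : p = 2 * d / ((d : ℝ) - 2 + 2 * (b - a)))
    (hn : n = (d : ℝ) / (1 + a - b))
    (hα : α = (((d : ℝ) - 2) / 2 - a) * (a + 1 - b) / (((d : ℝ) - 2) / 2 - a + b))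
    (hα0 : 0 < α) (hα1 : α ≤ 1)
    (hZ : Z = (2 : ℝ) ^ n * ∫ x : EuclideanSpace ℝ (Fin d),
        ‖x‖ ^ (-(b * p)) * (1 + ‖x‖ ^ (2 * α)) ^ (-n))
    (w : EuclideanSpace ℝ (Fin d) → ℝ)
    (hw : ∀ x, w x = ((1 + ‖x‖ ^ (2 * α)) / 2) ^ (-((n - 2) / 2))) :
    Integrable (fun x : EuclideanSpace ℝ (Fin d) => w x ^ p * ‖x‖ ^ (-(b * p))) ∧
    Integrable (fun x : EuclideanSpace ℝ (Fin d) =>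
        ‖fderiv ℝ w x‖ ^ 2 * ‖x‖ ^ (-(2 * a))) ∧
    (∫ x : EuclideanSpace ℝ (Fin d), w x ^ p * ‖x‖ ^ (-(b * p))) ^ (2 / p) =
      4 / (n * (n - 2) * α ^ 2 * Z ^ (2 / n)) *
        ∫ x : EuclideanSpace ℝ (Fin d), ‖fderiv ℝ w x‖ ^ 2 * ‖x‖ ^ (-(2 * a)) :=
  ckn_extremal_general d hd a b p n α Z hab hba hp hn hα hα0 hZ w hw
end

section
/- Let d ≥ 3 be an integer, a_c = (d−2)/2, and let (a,b) ∈ ℝ² satisfy a ≤ b < a+1 and a < a_c. Set n = d/(1+a−b) and α = (a_c−a)(a+1−b)/(a_c−a+b), so α > 0. Define φ(x) = (1+|x|^{2α})/2 and V = log φ on ℝ^d∖{0}. Then for every x ∈ ℝ^d∖{0}, |x|^{2(1−α)} [ ΔV(x) − (2a/|x|²) x·∇V(x) ] − ((n−2)/2) |x|^{2(1−α)} |∇V(x)|² = nα² / (2 φ(x)²), where Δ is the Euclidean Laplacian and ∇ the Euclidean gradient. -/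
/-!
Write `V x = f (‖x‖²)` with `f s = log ((1 + s ^ α) / 2)`. For a radial function
`∇V = 2 f'(s) x` and `ΔV = 2 d f'(s) + 4 s f''(s)`, with `s = ‖x‖²`. Putting `T = s ^ α` and
`p = s f'(s) = α T / (1 + T)`, one has `s² f''(s) = (α - 1) p - p²`, so the left-hand side equals
`(p / T) (2 (d - 2 - 2a + 2α) - 2 n p)`. The choice of `n` and `α` is exactly what makes
`n α = 2α + d - 2 - 2a`, and then this is `2 n α² / (1 + T)²`, the right-hand side.
-/

open MeasureTheory Real
open scoped RealInnerProductSpace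

/-- The Euclidean Laplacian of a function on `EuclideanSpace ℝ (Fin d)`. -/
noncomputable def euclideanLaplacian {d : ℕ} (u : EuclideanSpace ℝ (Fin d) → ℝ)
    (x : EuclideanSpace ℝ (Fin d)) : ℝ :=
  ∑ i : Fin d, fderiv ℝ (fun y => fderiv ℝ u y (EuclideanSpace.single i 1)) x
    (EuclideanSpace.single i 1)

open Filter Topology

section Radial

variable {F : Type*} [NormedAddCommGroup F] [InnerProductSpace ℝ F] {f f' : ℝ → ℝ} {c : ℝ} {x : F}

theorem HasDerivAt.hasFDerivAt_comp_norm_sq (hf : HasDerivAt f c (‖x‖ ^ 2)) :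
    HasFDerivAt (fun z => f (‖z‖ ^ 2)) ((2 * c) • innerSL ℝ x) x := by
  refine (hf.comp_hasFDerivAt x (hasStrictFDerivAt_norm_sq x).hasFDerivAt).congr_fderiv ?_
  rw [smul_comm, mul_smul, two_smul, two_smul]

theorem HasDerivAt.hasGradientAt_comp_norm_sq [CompleteSpace F] (hf : HasDerivAt f c (‖x‖ ^ 2)) :
    HasGradientAt (fun z => f (‖z‖ ^ 2)) ((2 * c) • x) x := by
  rw [hasGradientAt_iff_hasFDerivAt, map_smul]
  exact hf.hasFDerivAt_comp_norm_sq

theorem fderiv_fderiv_comp_norm_sq_apply (hf : ∀ᶠ s in 𝓝 (‖x‖ ^ 2), HasDerivAt f (f' s) s)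
    (hf' : HasDerivAt f' c (‖x‖ ^ 2)) (e : F) :
    fderiv ℝ (fun y => fderiv ℝ (fun z => f (‖z‖ ^ 2)) y e) x e
      = 2 * f' (‖x‖ ^ 2) * ‖e‖ ^ 2 + 4 * c * ⟪x, e⟫ ^ 2 := by
  have hdir : (fun y => fderiv ℝ (fun z => f (‖z‖ ^ 2)) y e) =ᶠ[𝓝 x]
      fun y => 2 * f' (‖y‖ ^ 2) * innerSL ℝ e y := by
    have hcont : Tendsto (fun y : F => ‖y‖ ^ 2) (𝓝 x) (𝓝 (‖x‖ ^ 2)) :=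
      (continuous_norm.pow 2).tendsto x
    filter_upwards [hcont.eventually hf] with y hy
    simp only [hy.hasFDerivAt_comp_norm_sq.fderiv, smul_apply, coe_innerSL_apply, real_inner_comm,
      smul_eq_mul]
  have hdir' : HasFDerivAt (fun y => 2 * f' (‖y‖ ^ 2) * innerSL ℝ e y) _ x :=
    (hf'.hasFDerivAt_comp_norm_sq.const_mul 2).mul (innerSL ℝ e).hasFDerivAt
  rw [hdir.fderiv_eq, hdir'.fderiv]
  simp only [add_apply, smul_apply, coe_innerSL_apply, real_inner_self_eq_norm_sq, real_inner_comm,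
    smul_eq_mul]
  ring

end Radial

theorem euclideanLaplacian_comp_norm_sq {d : ℕ} {f f' : ℝ → ℝ} {c : ℝ}
    {x : EuclideanSpace ℝ (Fin d)}
    (hf : ∀ᶠ s in 𝓝 (‖x‖ ^ 2), HasDerivAt f (f' s) s) (hf' : HasDerivAt f' c (‖x‖ ^ 2)) :
    euclideanLaplacian (fun z => f (‖z‖ ^ 2)) x = 2 * d * f' (‖x‖ ^ 2) + 4 * c * ‖x‖ ^ 2 := by
  simp only [euclideanLaplacian, fderiv_fderiv_comp_norm_sq_apply hf hf', PiLp.norm_single,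
    norm_one, one_pow, mul_one, EuclideanSpace.inner_single_right, one_mul, conj_trivial]
  rw [Finset.sum_add_distrib, Finset.sum_const, ← Finset.mul_sum, ← EuclideanSpace.real_norm_sq_eq,
    Finset.card_univ, Fintype.card_fin, nsmul_eq_mul]
  ring

theorem hasDerivAt_log_one_add_rpow_div_two {α s : ℝ} (hs : 0 < s) :
    HasDerivAt (fun t => log ((1 + t ^ α) / 2)) (α * s ^ (α - 1) / (1 + s ^ α)) s := by
  have hφ := ((hasDerivAt_rpow_const (p := α) (Or.inl hs.ne')).const_add 1).div_const 2
  refine (hφ.log (by positivity)).congr_deriv ?_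
  field_simp

theorem hasDerivAt_mul_rpow_sub_one_div_one_add_rpow {α s : ℝ} (hs : 0 < s) :
    HasDerivAt (fun t => α * t ^ (α - 1) / (1 + t ^ α))
      (α * (α - 1) * s ^ (α - 2) / (1 + s ^ α) - (α * s ^ (α - 1)) ^ 2 / (1 + s ^ α) ^ 2) s := by
  have hnum := (hasDerivAt_rpow_const (p := α - 1) (Or.inl hs.ne')).const_mul α
  have hden := (hasDerivAt_rpow_const (p := α) (Or.inl hs.ne')).const_add 1
  refine (hnum.div hden (by positivity)).congr_deriv ?_
  rw [show α - 1 - 1 = α - 2 by ring]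
  field_simp

theorem ckn_n_mul_α_eq {d a b n α : ℝ} (h₁ : 1 + a - b ≠ 0) (h₂ : (d - 2) / 2 - a + b ≠ 0)
    (hn : n = d / (1 + a - b)) (hα : α = ((d - 2) / 2 - a) * (a + 1 - b) / ((d - 2) / 2 - a + b)) :
    n * α = 2 * α + d - 2 - 2 * a := by
  have hn' : n * (1 + a - b) = d := by rw [hn, div_mul_cancel₀ _ h₁]
  have hα' : α * ((d - 2) / 2 - a + b) = ((d - 2) / 2 - a) * (a + 1 - b) := by
    rw [hα, div_mul_cancel₀ _ h₂]
  apply mul_right_cancel₀ (mul_ne_zero h₁ h₂)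
  linear_combination (α * ((d - 2) / 2 - a + b)) * hn' + (2 * ((d - 2) / 2 - a + b)) * hα'

/-- Key conformal computation: L̂V - ((n-2)/2)Γ̂(V) = nα²/(2φ²) for V = log φ,
φ = (1+|x|^{2α})/2, on the Euclidean CKN space. -/
theorem conformal_identity_spherical (d : ℕ) (hd : 3 ≤ d) (a b n α : ℝ)
    (hab : a ≤ b) (hba : b < a + 1) (ha : a < ((d : ℝ) - 2) / 2)
    (hn : n = (d : ℝ) / (1 + a - b))
    (hα : α = (((d : ℝ) - 2) / 2 - a) * (a + 1 - b) / (((d : ℝ) - 2) / 2 - a + b))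
    (V : EuclideanSpace ℝ (Fin d) → ℝ)
    (hV : ∀ x, V x = Real.log ((1 + ‖x‖ ^ (2 * α)) / 2)) :
    ∀ x : EuclideanSpace ℝ (Fin d), x ≠ 0 →
      ‖x‖ ^ (2 * (1 - α)) *
          (euclideanLaplacian V x - 2 * a / ‖x‖ ^ 2 * ⟪x, gradient V x⟫)
        - (n - 2) / 2 * (‖x‖ ^ (2 * (1 - α)) * ‖gradient V x‖ ^ 2) =
      n * α ^ 2 / (2 * ((1 + ‖x‖ ^ (2 * α)) / 2) ^ 2) := by
  have hd' : (3 : ℝ) ≤ d := by exact_mod_cast hd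
  have hnα := ckn_n_mul_α_eq (by linarith) (by linarith) hn hα
  have hrpow (z : EuclideanSpace ℝ (Fin d)) (β : ℝ) : ‖z‖ ^ (2 * β) = (‖z‖ ^ 2) ^ β := by
    exact_mod_cast rpow_natCast_mul (norm_nonneg z) 2 β
  obtain rfl : V = fun z => log ((1 + (‖z‖ ^ 2) ^ α) / 2) := funext fun z => by rw [hV, hrpow]
  intro x hx
  have hs : 0 < ‖x‖ ^ 2 := by positivity
  have hf : ∀ᶠ s in 𝓝 (‖x‖ ^ 2), HasDerivAt (fun t => log ((1 + t ^ α) / 2))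
      (α * s ^ (α - 1) / (1 + s ^ α)) s :=
    (eventually_gt_nhds hs).mono fun s => hasDerivAt_log_one_add_rpow_div_two
  rw [euclideanLaplacian_comp_norm_sq hf (hasDerivAt_mul_rpow_sub_one_div_one_add_rpow hs),
    (hasDerivAt_log_one_add_rpow_div_two hs).hasGradientAt_comp_norm_sq.gradient,
    real_inner_smul_right, real_inner_self_eq_norm_sq, norm_smul, norm_eq_abs, mul_pow _ ‖x‖,
    sq_abs, hrpow, hrpow]
  generalize ‖x‖ ^ 2 = s at hs ⊢
  rw [rpow_sub hs, rpow_sub hs, rpow_sub hs, rpow_one, rpow_two]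
  field_simp
  linear_combination -2 * α * (1 + s ^ α) * hnα
end
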